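/- Let F: X → ℝ≥0 be differentiable, monotone, and DR-submodular, and K ⊆ X convex. If x ∈ K is a stationary point of F over K, then F(x) ≥ OPT/2 where OPT = sup_{y∈K} F(y). -/

import Mathlib

/-!
For `y ∈ K`, compare `F` at `x` with `F` at the coordinatewise maximum `z = x ⊔ y` and minimum
`w = x ⊓ y`, both of which lie in the box. Along the segments from `x` to `z` and from `x` to `w`
the antitone gradient makes `F` lie below its tangent at `x`, so
`F z + F w ≤ 2 F x + ⟪∇F x, z + w - 2x⟫ = 2 F x + ⟪∇F x, y - x⟫ ≤ 2 F x`
by stationarity, while monotonicity and nonnegativity give `F y ≤ F z` and `0 ≤ F w`.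
-/

open Set

open scoped RealInnerProductSpace

section Segment

variable {E : Type*} [NormedAddCommGroup E] [InnerProductSpace ℝ E] [CompleteSpace E]
  {F : E → ℝ} {g : E → E}

theorem HasGradientAt.hasDerivAt_comp_add_smul {g' u d : E} {t : ℝ}
    (h : HasGradientAt F g' (u + t • d)) :
    HasDerivAt (fun s : ℝ => F (u + s • d)) ⟪g', d⟫ t := by
  have hline : HasDerivAt (fun s : ℝ => u + s • d) d t := by
    simpa using ((hasDerivAt_id t).smul_const d).const_add u
  exact h.hasFDerivAt.comp_hasDerivAt t hline

theorem le_add_inner_of_inner_gradient_le {u v : E}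
    (hF : ∀ t ∈ Icc (0 : ℝ) 1, HasGradientAt F (g (u + t • (v - u))) (u + t • (v - u)))
    (hg : ∀ t ∈ Icc (0 : ℝ) 1, ⟪g (u + t • (v - u)), v - u⟫ ≤ ⟪g u, v - u⟫) :
    F v ≤ F u + ⟪g u, v - u⟫ := by
  have hderiv : ∀ t ∈ Icc (0 : ℝ) 1,
      HasDerivAt (fun s : ℝ => F (u + s • (v - u))) ⟪g (u + t • (v - u)), v - u⟫ t :=
    fun t ht => (hF t ht).hasDerivAt_comp_add_smul
  have hmvt := (convex_Icc (0 : ℝ) 1).image_sub_le_mul_sub_of_deriv_le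
    (fun t ht => (hderiv t ht).continuousAt.continuousWithinAt)
    (fun t ht => (hderiv t (interior_subset ht)).differentiableAt.differentiableWithinAt)
    (fun t ht => (hderiv t (interior_subset ht)).deriv ▸ hg t (interior_subset ht))
    0 (left_mem_Icc.2 zero_le_one) 1 (right_mem_Icc.2 zero_le_one) zero_le_one
  simp only [one_smul, zero_smul, add_zero, add_sub_cancel, sub_zero, mul_one] at hmvt
  linarith

end Segment

section Coordinatewise

variable {ι : Type*} {x v : EuclideanSpace ℝ ι}

theorem EuclideanSpace.add_smul_sub_apply (t : ℝ) (i : ι) :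
    (x + t • (v - x)) i = x i + t * (v i - x i) := by
  simp only [PiLp.add_apply, PiLp.smul_apply, PiLp.sub_apply, smul_eq_mul]

def box (a b : ι → ℝ) : Set (EuclideanSpace ℝ ι) := {x | ∀ i, x i ∈ Icc (a i) (b i)}

theorem convex_box {a b : ι → ℝ} : Convex ℝ (box a b) := by
  intro x hx y hy s t hs ht hst i
  simpa only [PiLp.add_apply, PiLp.smul_apply] using
    convex_Icc (a i) (b i) (hx i) (hy i) hs ht hst

variable [Fintype ι] {X : Set (EuclideanSpace ℝ ι)} {F : EuclideanSpace ℝ ι → ℝ}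
  {g : EuclideanSpace ℝ ι → EuclideanSpace ℝ ι}

theorem EuclideanSpace.real_inner_eq_sum_mul (p q : EuclideanSpace ℝ ι) :
    ⟪p, q⟫ = ∑ i, p i * q i := by
  simp only [PiLp.inner_apply, Real.inner_apply]

theorem le_add_inner_of_le (hX : Convex ℝ X) (hdiff : ∀ p ∈ X, HasGradientAt F (g p) p)
    (hDR : ∀ p ∈ X, ∀ q ∈ X, (∀ i, p i ≤ q i) → ∀ i, g q i ≤ g p i)
    (hx : x ∈ X) (hv : v ∈ X) (hxv : ∀ i, x i ≤ v i) :
    F v ≤ F x + ⟪g x, v - x⟫ := by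
  refine le_add_inner_of_inner_gradient_le (fun t ht => hdiff _ (hX.add_smul_sub_mem hx hv ht))
    fun t ht => ?_
  have hxp : ∀ i, x i ≤ (x + t • (v - x)) i := fun i => by
    rw [EuclideanSpace.add_smul_sub_apply]
    nlinarith [ht.1, hxv i]
  simp only [EuclideanSpace.real_inner_eq_sum_mul, PiLp.sub_apply]
  exact Finset.sum_le_sum fun i _ => mul_le_mul_of_nonneg_right
    (hDR x hx _ (hX.add_smul_sub_mem hx hv ht) hxp i) (sub_nonneg.2 (hxv i))

theorem le_add_inner_of_ge (hX : Convex ℝ X) (hdiff : ∀ p ∈ X, HasGradientAt F (g p) p)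
    (hDR : ∀ p ∈ X, ∀ q ∈ X, (∀ i, p i ≤ q i) → ∀ i, g q i ≤ g p i)
    (hx : x ∈ X) (hv : v ∈ X) (hvx : ∀ i, v i ≤ x i) :
    F v ≤ F x + ⟪g x, v - x⟫ := by
  refine le_add_inner_of_inner_gradient_le (fun t ht => hdiff _ (hX.add_smul_sub_mem hx hv ht))
    fun t ht => ?_
  have hpx : ∀ i, (x + t • (v - x)) i ≤ x i := fun i => by
    rw [EuclideanSpace.add_smul_sub_apply]
    nlinarith [ht.1, hvx i]
  simp only [EuclideanSpace.real_inner_eq_sum_mul, PiLp.sub_apply]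
  exact Finset.sum_le_sum fun i _ => mul_le_mul_of_nonpos_right
    (hDR _ (hX.add_smul_sub_mem hx hv ht) x hx hpx i) (sub_nonpos.2 (hvx i))

theorem le_two_mul_add_inner_of_mem_box {a b : ι → ℝ}
    (hF0 : ∀ p ∈ box a b, 0 ≤ F p) (hdiff : ∀ p ∈ box a b, HasGradientAt F (g p) p)
    (hmono : ∀ p ∈ box a b, ∀ q ∈ box a b, (∀ i, p i ≤ q i) → F p ≤ F q)
    (hDR : ∀ p ∈ box a b, ∀ q ∈ box a b, (∀ i, p i ≤ q i) → ∀ i, g q i ≤ g p i)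
    {y : EuclideanSpace ℝ ι} (hx : x ∈ box a b) (hy : y ∈ box a b) :
    F y ≤ 2 * F x + ⟪g x, y - x⟫ := by
  set z : EuclideanSpace ℝ ι := WithLp.toLp 2 fun i => max (x i) (y i)
  set w : EuclideanSpace ℝ ι := WithLp.toLp 2 fun i => min (x i) (y i)
  have hz : z ∈ box a b := fun i => ⟨le_max_of_le_left (hx i).1, max_le (hx i).2 (hy i).2⟩
  have hw : w ∈ box a b := fun i => ⟨le_min (hx i).1 (hy i).1, min_le_of_left_le (hx i).2⟩
  have hFz := le_add_inner_of_le convex_box hdiff hDR hx hz fun i => le_max_left (x i) (y i)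
  have hFw := le_add_inner_of_ge convex_box hdiff hDR hx hw fun i => min_le_left (x i) (y i)
  have hzw : (z - x) + (w - x) = y - x := by
    ext i
    simp only [PiLp.add_apply, PiLp.sub_apply, z, w]
    linarith [max_add_min (x i) (y i)]
  have hinner : ⟪g x, z - x⟫ + ⟪g x, w - x⟫ = ⟪g x, y - x⟫ := by
    rw [← inner_add_right, hzw]
  linarith [hmono y hy z hz fun i => le_max_right (x i) (y i), hF0 w hw]

end Coordinatewise

theorem stmt_4_general (n : ℕ) (a b : Fin n → ℝ)
    (X : Set (EuclideanSpace ℝ (Fin n)))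
    (hX : X = {x : EuclideanSpace ℝ (Fin n) | ∀ i, x i ∈ Set.Icc (a i) (b i)})
    (F : EuclideanSpace ℝ (Fin n) → ℝ)
    (g : EuclideanSpace ℝ (Fin n) → EuclideanSpace ℝ (Fin n))
    (hF0 : ∀ x ∈ X, 0 ≤ F x)
    (hdiff : ∀ x ∈ X, HasGradientAt F (g x) x)
    (hmono : ∀ x ∈ X, ∀ y ∈ X, (∀ i, x i ≤ y i) → F x ≤ F y)
    (hDR : ∀ x ∈ X, ∀ y ∈ X, (∀ i, x i ≤ y i) → ∀ i, g y i ≤ g x i)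
    (K : Set (EuclideanSpace ℝ (Fin n))) (hKX : K ⊆ X)
    (x : EuclideanSpace ℝ (Fin n)) (hx : x ∈ K)
    (hstat : ∀ y ∈ K, ∑ i, g x i * (y i - x i) ≤ 0) :
    sSup (F '' K) / 2 ≤ F x := by
  subst hX
  have hsup : sSup (F '' K) ≤ 2 * F x := by
    refine csSup_le ⟨F x, x, hx, rfl⟩ ?_
    rintro _ ⟨y, hy, rfl⟩
    have hFy := le_two_mul_add_inner_of_mem_box hF0 hdiff hmono hDR (hKX hx) (hKX hy)
    rw [EuclideanSpace.real_inner_eq_sum_mul] at hFy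
    simp only [PiLp.sub_apply] at hFy
    linarith [hstat y hy]
  linarith

/-- Stationary points of a monotone DR-submodular function `F`
(antitone gradient) over a convex set `K ⊆ X` satisfy `F x ≥ OPT/2`,
where `OPT = sup_{y ∈ K} F y`. -/
theorem stmt_4 (n : ℕ) (a b : Fin n → ℝ) (ha : ∀ i, 0 ≤ a i)
    (X : Set (EuclideanSpace ℝ (Fin n)))
    (hX : X = {x : EuclideanSpace ℝ (Fin n) | ∀ i, x i ∈ Set.Icc (a i) (b i)})
    (F : EuclideanSpace ℝ (Fin n) → ℝ)
    (g : EuclideanSpace ℝ (Fin n) → EuclideanSpace ℝ (Fin n))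
    (hF0 : ∀ x ∈ X, 0 ≤ F x)
    (hdiff : ∀ x ∈ X, HasGradientAt F (g x) x)
    (hmono : ∀ x ∈ X, ∀ y ∈ X, (∀ i, x i ≤ y i) → F x ≤ F y)
    (hDR : ∀ x ∈ X, ∀ y ∈ X, (∀ i, x i ≤ y i) → ∀ i, g y i ≤ g x i)
    (K : Set (EuclideanSpace ℝ (Fin n))) (hKX : K ⊆ X) (hK : Convex ℝ K)
    (hbdd : BddAbove (F '' K))
    (x : EuclideanSpace ℝ (Fin n)) (hx : x ∈ K)
    (hstat : ∀ y ∈ K, ∑ i, g x i * (y i - x i) ≤ 0) :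
    sSup (F '' K) / 2 ≤ F x :=
  stmt_4_general n a b X hX F g hF0 hdiff hmono hDR K hKX x hx hstat
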